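/- arXiv:2203.12173 — 10 statements merged into one kernel-verified Lean document; each statement's English description precedes it below -/
import Mathlib

section
/- Fix θ > 0 and λ₀ > 0, and let h : [0,∞) → ℝ be a continuous function (in the model, h(t) = α_t ∫ (z')^{βθ} dG_{d,t}(z') is the arrival rate of ideas weighted by the source distribution of insights). Suppose F : [0,∞) × (0,∞) → ℝ is strictly positive, for each z > 0 the map t ↦ F(t,z) is differentiable with ∂/∂t log F(t,z) = − h(t) · z^{−θ} for all t ≥ 0, and F(0,z) = exp(−λ₀ z^{−θ}) for all z > 0. Then for every t ≥ 0 and z > 0 one has F(t,z) = exp(−λ(t) z^{−θ}), where λ(t) = λ₀ + ∫₀^t h(τ) dτ; that is, F(t,·) is a Fréchet cumulative distribution function with shape parameter θ and location parameter λ(t) for every t. -/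
open Real Set MeasureTheory

theorem eq_mul_exp_integral_of_hasDerivAt_log {f f' : ℝ → ℝ} {a b : ℝ}
    (ha : 0 < f a) (hb : 0 < f b)
    (hf : ∀ s ∈ uIcc a b, HasDerivAt (fun s => log (f s)) (f' s) s)
    (hint : IntervalIntegrable f' volume a b) :
    f b = f a * exp (∫ s in a..b, f' s) := by
  rw [intervalIntegral.integral_eq_sub_of_hasDerivAt hf hint, exp_sub, exp_log ha, exp_log hb]
  field_simp

theorem frechet_law_of_motion_general (θ lam0 : ℝ)
    (h : ℝ → ℝ) (hcont : ContinuousOn h (Set.Ici (0 : ℝ)))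
    (F : ℝ → ℝ → ℝ)
    (hFpos : ∀ t ≥ (0 : ℝ), ∀ z > (0 : ℝ), 0 < F t z)
    (hderiv : ∀ z > (0 : ℝ), ∀ t ≥ (0 : ℝ),
      HasDerivAt (fun s => Real.log (F s z)) (-(h t) * z ^ (-θ)) t)
    (hF0 : ∀ z > (0 : ℝ), F 0 z = Real.exp (-lam0 * z ^ (-θ))) :
    ∀ t ≥ (0 : ℝ), ∀ z > (0 : ℝ),
      F t z = Real.exp (-(lam0 + ∫ τ in (0 : ℝ)..t, h τ) * z ^ (-θ)) := by
  intro t ht z hz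
  have huIcc : uIcc 0 t ⊆ Ici 0 := by
    rw [uIcc_of_le ht]
    exact Icc_subset_Ici_self
  have hint : IntervalIntegrable h volume 0 t := (hcont.mono huIcc).intervalIntegrable
  rw [eq_mul_exp_integral_of_hasDerivAt_log (f := (F · z))
      (hFpos 0 le_rfl z hz) (hFpos t ht z hz)
      (fun s hs => hderiv z hz s (huIcc hs)) (hint.neg.mul_const _),
    hF0 z hz, ← exp_add, intervalIntegral.integral_mul_const, intervalIntegral.integral_neg]
  ring_nf

/-- **Generic Law of Motion (Fréchet frontier stays Fréchet).**
If `F t z` is strictly positive, the log-derivative in time equals `-h t * z ^ (-θ)`,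
and initially `F 0 z = exp (-λ₀ * z ^ (-θ))`, then for all `t ≥ 0`, `z > 0`,
`F t z = exp (-(λ₀ + ∫₀ᵗ h) * z ^ (-θ))`, i.e. `F t ·` is a Fréchet cdf with
shape `θ` and location `λ₀ + ∫₀ᵗ h`. -/
theorem frechet_law_of_motion (θ lam0 : ℝ) (hθ : 0 < θ) (hlam0 : 0 < lam0)
    (h : ℝ → ℝ) (hcont : ContinuousOn h (Set.Ici (0 : ℝ)))
    (F : ℝ → ℝ → ℝ)
    (hFpos : ∀ t ≥ (0 : ℝ), ∀ z > (0 : ℝ), 0 < F t z)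
    (hderiv : ∀ z > (0 : ℝ), ∀ t ≥ (0 : ℝ),
      HasDerivAt (fun s => Real.log (F s z)) (-(h t) * z ^ (-θ)) t)
    (hF0 : ∀ z > (0 : ℝ), F 0 z = Real.exp (-lam0 * z ^ (-θ))) :
    ∀ t ≥ (0 : ℝ), ∀ z > (0 : ℝ),
      F t z = Real.exp (-(lam0 + ∫ τ in (0 : ℝ)..t, h τ) * z ^ (-θ)) :=
  frechet_law_of_motion_general θ lam0 h hcont F hFpos hderiv hF0
end

section
/- Let θ > 0, λ > 0, π ∈ (0,1], and β ∈ [0,1). Then the iterated improper integral ∫₀^∞ ∫_{z₂}^∞ z₁^{βθ} · (1/π) · exp(−(λ/π) z₂^{−θ}) · (θ λ z₁^{−θ−1}) · (θ λ z₂^{−θ−1}) dz₁ dz₂ equals Γ(1−β) · λ^{β} · π^{1−β}, where Γ is the Gamma function. -/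
/-!
The inner integral is elementary:
`∫_{z₂}^∞ z₁^(βθ - θ - 1) dz₁ = (z₂^(-θ))^(1-β) / ((1-β)θ)`. The substitution `y = z₂^(-θ)`
then turns the outer integral into the Gamma integral
`∫₀^∞ y^(1-β) e^(-(λ/p) y) dy = (p/λ)^(2-β) Γ(2-β)`, and `Γ(2-β) = (1-β) Γ(1-β)` cancels
the factor `1-β`.
-/

open MeasureTheory Real Set

theorem integral_comp_rpow_neg_rpow_mul_exp_neg_mul_Ioi {θ a r : ℝ} (hθ : 0 < θ) (ha : 0 < a)
    (hr : 0 < r) :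
    ∫ z in Ioi 0, θ * z ^ (-θ - 1) * ((z ^ (-θ)) ^ (a - 1) * exp (-(r * z ^ (-θ)))) =
      (1 / r) ^ a * Gamma a := by
  rw [← integral_rpow_mul_exp_neg_mul_Ioi ha hr,
    ← integral_comp_rpow_Ioi (fun y ↦ y ^ (a - 1) * exp (-(r * y))) (neg_ne_zero.mpr hθ.ne')]
  simp only [abs_neg, abs_of_pos hθ, smul_eq_mul]

theorem integral_Ioi_rpow_mul_rpow_neg_sub_one {θ β z : ℝ} (hθ : 0 < θ) (hβ : β < 1)
    (hz : 0 < z) :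
    ∫ x in Ioi z, x ^ (β * θ) * x ^ (-θ - 1) = (z ^ (-θ)) ^ (1 - β) / ((1 - β) * θ) := by
  have hlt : β * θ + (-θ - 1) < -1 := by nlinarith
  calc ∫ x in Ioi z, x ^ (β * θ) * x ^ (-θ - 1)
      = ∫ x in Ioi z, x ^ (β * θ + (-θ - 1)) :=
        setIntegral_congr_fun measurableSet_Ioi fun x hx ↦ (rpow_add (hz.trans hx) _ _).symm
    _ = (z ^ (-θ)) ^ (1 - β) / ((1 - β) * θ) := by
        rw [integral_Ioi_rpow_of_lt hlt hz, ← rpow_mul hz.le, neg_div, ← div_neg]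
        ring_nf

theorem sq_div_mul_rpow_mul_Gamma_two_sub {lam p β : ℝ} (hlam : 0 < lam) (hp : 0 < p)
    (hβ : β < 1) :
    lam ^ 2 / (p * (1 - β)) * ((1 / (lam / p)) ^ (2 - β) * Gamma (2 - β)) =
      Gamma (1 - β) * lam ^ β * p ^ (1 - β) := by
  have h1β : 1 - β ≠ 0 := by linarith
  rw [show 2 - β = (1 - β) + 1 by ring, Gamma_add_one h1β, one_div_div,
    div_rpow hp.le hlam.le, rpow_add_one hp.ne', rpow_add_one hlam.ne',
    rpow_sub hlam, rpow_one]
  field_simp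

/-- **Key integral in Proposition 1 (Law of Motion in a Multi-Sector Framework).**
Integrating `z₁ ^ (β θ)` against the joint density of the best and second-best
productivity draws of the lowest-cost supplier (Fréchet location `λ`, shape `θ`,
trade share `p`) gives `Γ(1-β) * λ ^ β * p ^ (1-β)`. -/
theorem diffusion_integral (θ lam p β : ℝ) (hθ : 0 < θ) (hlam : 0 < lam)
    (hp : p ∈ Set.Ioc (0 : ℝ) 1) (hβ : β ∈ Set.Ico (0 : ℝ) 1) :
    (∫ z₂ in Set.Ioi (0 : ℝ), ∫ z₁ in Set.Ioi z₂,
        z₁ ^ (β * θ) *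
          ((1 / p) * Real.exp (-(lam / p) * z₂ ^ (-θ)) *
            (θ * lam * z₁ ^ (-θ - 1)) * (θ * lam * z₂ ^ (-θ - 1))))
      = Real.Gamma (1 - β) * lam ^ β * p ^ (1 - β) := by
  obtain ⟨hp0, -⟩ := hp
  obtain ⟨-, hβ1⟩ := hβ
  have h1β : 1 - β ≠ 0 := by linarith
  calc _ = ∫ z in Ioi 0, lam ^ 2 / (p * (1 - β)) *
          (θ * z ^ (-θ - 1) * ((z ^ (-θ)) ^ ((2 - β) - 1) * exp (-(lam / p * z ^ (-θ))))) := by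
        refine setIntegral_congr_fun measurableSet_Ioi fun z hz ↦ ?_
        set c := 1 / p * exp (-(lam / p) * z ^ (-θ)) * (θ * lam) * (θ * lam * z ^ (-θ - 1))
          with hc
        calc _ = ∫ x in Ioi z, c * (x ^ (β * θ) * x ^ (-θ - 1)) := by
              refine setIntegral_congr_fun measurableSet_Ioi fun x _ ↦ ?_
              ring
          _ = c * ((z ^ (-θ)) ^ (1 - β) / ((1 - β) * θ)) := by
              rw [integral_const_mul, integral_Ioi_rpow_mul_rpow_neg_sub_one hθ hβ1 hz]
          _ = _ := by
              rw [show 2 - β - 1 = 1 - β by ring, ← neg_mul, hc]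
              field_simp
    _ = lam ^ 2 / (p * (1 - β)) * ((1 / (lam / p)) ^ (2 - β) * Gamma (2 - β)) := by
        rw [integral_const_mul, integral_comp_rpow_neg_rpow_mul_exp_neg_mul_Ioi hθ
          (by linarith) (div_pos hlam hp0)]
    _ = Gamma (1 - β) * lam ^ β * p ^ (1 - β) := sq_div_mul_rpow_mul_Gamma_two_sub hlam hp0 hβ1
end

section
/- Let θ > 0, let D be a finite nonempty index set, and for each n ∈ D let λ_n > 0 and x_n > 0. Let (Z_n)_{n∈D} be independent real-valued random variables where each Z_n has the Fréchet cumulative distribution function P(Z_n ≤ z) = exp(−λ_n z^{−θ}) for z > 0. Then for any s ∈ D, the probability that x_s / Z_s < x_n / Z_n for all n ≠ s equals λ_s x_s^{−θ} / (Σ_{n∈D} λ_n x_n^{−θ}). -/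
open MeasureTheory ProbabilityTheory Real Set Filter Topology

/-!
Put `W n = Z n / x n`: each `W n` is Fréchet with location `a n = λ n * x n ^ (-θ)`, and
the event is that `W s` is the strict maximum. Given `W s = w > 0`, independence makes the
probability of `W n < w` for all `n ≠ s` equal to
`∏ exp (-a n * w ^ (-θ)) = exp (-A * w ^ (-θ))` with `A = ∑_{n ≠ s} a n`. It remains to average
this over `W s`: writing `W s = F⁻¹(U)` with `U` uniform on `(0, 1)` and `F` its CDF,
`exp (-A * W s ^ (-θ)) = U ^ (A / a s)`, whose mean is `a s / (a s + A)`.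
-/

lemma setLIntegral_Ioo_zero_one_rpow {c : ℝ} (hc : -1 < c) :
    ∫⁻ u in Ioo (0 : ℝ) 1, ENNReal.ofReal (u ^ c) = ENNReal.ofReal (1 / (c + 1)) := by
  have hint : IntegrableOn (fun u : ℝ => u ^ c) (Ioo 0 1) := by
    have := intervalIntegral.intervalIntegrable_rpow' (a := 0) (b := 1) hc
    rw [intervalIntegrable_iff, uIoc_of_le zero_le_one] at this
    exact this.mono_set Ioo_subset_Ioc_self
  rw [← ofReal_integral_eq_lintegral_ofReal hint
    ((ae_restrict_iff' measurableSet_Ioo).2 (ae_of_all _ fun u hu => rpow_nonneg hu.1.le _)),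
    ← integral_Ioc_eq_integral_Ioo, ← intervalIntegral.integral_of_le zero_le_one,
    integral_rpow (Or.inl hc), one_rpow, zero_rpow (by linarith : c + 1 ≠ 0), sub_zero]

noncomputable def frechetCDF (l θ z : ℝ) : ℝ := exp (-l * z ^ (-θ))

def HasFrechetCDF (ν : Measure ℝ) (l θ : ℝ) : Prop :=
  ∀ z > 0, ν (Iic z) = ENNReal.ofReal (frechetCDF l θ z)

noncomputable def frechetQuantile (l θ u : ℝ) : ℝ := (-log u / l) ^ (-θ⁻¹)

section Frechet

variable {l θ : ℝ}

lemma frechetCDF_pos {z : ℝ} : 0 < frechetCDF l θ z :=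
  exp_pos _

lemma frechetCDF_lt_one (hl : 0 < l) {z : ℝ} (hz : 0 < z) : frechetCDF l θ z < 1 := by
  have := rpow_pos_of_pos hz (-θ)
  exact exp_lt_one_iff.2 (by nlinarith)

lemma strictMonoOn_frechetCDF (hl : 0 < l) (hθ : 0 < θ) :
    StrictMonoOn (frechetCDF l θ) (Ioi 0) := fun _ hy _ _ hyz =>
  exp_lt_exp.2 <| mul_lt_mul_of_neg_left (rpow_lt_rpow_of_neg hy hyz (neg_lt_zero.2 hθ))
    (neg_lt_zero.2 hl)

lemma prod_frechetCDF {ι : Type*} (S : Finset ι) (a : ι → ℝ) (z : ℝ) :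
    ∏ n ∈ S, frechetCDF (a n) θ z = frechetCDF (∑ n ∈ S, a n) θ z := by
  simp only [frechetCDF, ← exp_sum, ← Finset.sum_mul, Finset.sum_neg_distrib]

lemma tendsto_frechetCDF_nhdsGT_zero (hl : 0 < l) (hθ : 0 < θ) :
    Tendsto (frechetCDF l θ) (𝓝[>] 0) (𝓝 0) :=
  tendsto_exp_atBot.comp <|
    (tendsto_rpow_neg_nhdsGT_zero (neg_lt_zero.2 hθ)).const_mul_atTop_of_neg (neg_lt_zero.2 hl)

lemma frechetQuantile_pos (hl : 0 < l) {u : ℝ} (hu : u ∈ Ioo 0 1) :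
    0 < frechetQuantile l θ u :=
  rpow_pos_of_pos (div_pos (neg_pos.2 (log_neg hu.1 hu.2)) hl) _

lemma frechetQuantile_rpow_neg (hl : 0 < l) (hθ : θ ≠ 0) {u : ℝ} (hu : u ∈ Ioo 0 1) :
    frechetQuantile l θ u ^ (-θ) = -log u / l := by
  rw [frechetQuantile, ← rpow_mul (div_pos (neg_pos.2 (log_neg hu.1 hu.2)) hl).le,
    neg_mul_neg, inv_mul_cancel₀ hθ, rpow_one]

lemma frechetCDF_frechetQuantile (hl : 0 < l) (hθ : θ ≠ 0) {u : ℝ} (hu : u ∈ Ioo 0 1) :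
    frechetCDF l θ (frechetQuantile l θ u) = u := by
  rw [frechetCDF, frechetQuantile_rpow_neg hl hθ hu, neg_mul, mul_div_cancel₀ _ hl.ne', neg_neg,
    exp_log hu.1]

lemma frechetQuantile_le_iff (hl : 0 < l) (hθ : 0 < θ) {u z : ℝ} (hu : u ∈ Ioo 0 1)
    (hz : 0 < z) :
    frechetQuantile l θ u ≤ z ↔ u ≤ frechetCDF l θ z := by
  rw [← (strictMonoOn_frechetCDF hl hθ).le_iff_le (frechetQuantile_pos hl hu) hz,
    frechetCDF_frechetQuantile hl hθ.ne' hu]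

lemma frechetQuantile_lt_iff (hl : 0 < l) (hθ : 0 < θ) {u z : ℝ} (hu : u ∈ Ioo 0 1)
    (hz : 0 < z) :
    frechetQuantile l θ u < z ↔ u < frechetCDF l θ z := by
  rw [← (strictMonoOn_frechetCDF hl hθ).lt_iff_lt (frechetQuantile_pos hl hu) hz,
    frechetCDF_frechetQuantile hl hθ.ne' hu]

lemma frechetQuantile_preimage_Iic_inter (hl : 0 < l) (hθ : 0 < θ) {z : ℝ} (hz : 0 < z) :
    frechetQuantile l θ ⁻¹' Iic z ∩ Ioo 0 1 = Ioc 0 (frechetCDF l θ z) := by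
  ext u
  simp only [mem_inter_iff, mem_preimage, mem_Iic, mem_Ioc]
  constructor
  · rintro ⟨h, hu⟩
    exact ⟨hu.1, (frechetQuantile_le_iff hl hθ hu hz).1 h⟩
  · rintro ⟨hu0, hu⟩
    have hu' : u ∈ Ioo 0 1 := ⟨hu0, hu.trans_lt (frechetCDF_lt_one hl hz)⟩
    exact ⟨(frechetQuantile_le_iff hl hθ hu' hz).2 hu, hu'⟩

lemma frechetQuantile_preimage_Iio_inter (hl : 0 < l) (hθ : 0 < θ) {z : ℝ} (hz : 0 < z) :
    frechetQuantile l θ ⁻¹' Iio z ∩ Ioo 0 1 = Ioo 0 (frechetCDF l θ z) := by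
  ext u
  simp only [mem_inter_iff, mem_preimage, mem_Iio, mem_Ioo]
  constructor
  · rintro ⟨h, hu⟩
    exact ⟨hu.1, (frechetQuantile_lt_iff hl hθ hu hz).1 h⟩
  · rintro ⟨hu0, hu⟩
    have hu' : u ∈ Ioo 0 1 := ⟨hu0, hu.trans (frechetCDF_lt_one hl hz)⟩
    exact ⟨(frechetQuantile_lt_iff hl hθ hu' hz).2 hu, hu'⟩

lemma measurable_frechetQuantile (l θ : ℝ) : Measurable (frechetQuantile l θ) := by
  unfold frechetQuantile
  fun_prop

namespace HasFrechetCDF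

variable {ν : Measure ℝ}

lemma measure_Iic_zero (h : HasFrechetCDF ν l θ) (hl : 0 < l) (hθ : 0 < θ) :
    ν (Iic 0) = 0 := by
  have hlim : Tendsto (fun z => ν (Iic z)) (𝓝[>] 0) (𝓝 0) := by
    rw [← ENNReal.ofReal_zero]
    refine ((ENNReal.continuous_ofReal.tendsto 0).comp
      (tendsto_frechetCDF_nhdsGT_zero hl hθ)).congr' ?_
    filter_upwards [self_mem_nhdsWithin] with z hz using (h z hz).symm
  exact nonpos_iff_eq_zero.1 <| ge_of_tendsto hlim <| eventually_nhdsWithin_of_forall fun _ hz =>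
    measure_mono (Iic_subset_Iic.2 (le_of_lt hz))

lemma ae_pos (h : HasFrechetCDF ν l θ) (hl : 0 < l) (hθ : 0 < θ) : ∀ᵐ z ∂ν, 0 < z := by
  rw [ae_iff]
  simp only [not_lt]
  exact h.measure_Iic_zero hl hθ

lemma eq_map_frechetQuantile [IsFiniteMeasure ν] (h : HasFrechetCDF ν l θ) (hl : 0 < l)
    (hθ : 0 < θ) : ν = (volume.restrict (Ioo 0 1)).map (frechetQuantile l θ) := by
  refine Measure.ext_of_Iic _ _ fun z => ?_
  rw [Measure.map_apply (measurable_frechetQuantile l θ) measurableSet_Iic,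
    Measure.restrict_apply' measurableSet_Ioo]
  rcases le_or_gt z 0 with hz | hz
  · have hempty : frechetQuantile l θ ⁻¹' Iic z ∩ Ioo 0 1 = ∅ :=
      eq_empty_of_forall_notMem fun u ⟨hqu, hu⟩ =>
        (frechetQuantile_pos hl hu).not_ge (le_trans hqu hz)
    rw [hempty, measure_empty]
    exact measure_mono_null (Iic_subset_Iic.2 hz) (h.measure_Iic_zero hl hθ)
  · rw [frechetQuantile_preimage_Iic_inter hl hθ hz, volume_Ioc, sub_zero, h z hz]

lemma measure_Iio [IsFiniteMeasure ν] (h : HasFrechetCDF ν l θ) (hl : 0 < l) (hθ : 0 < θ)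
    {z : ℝ} (hz : 0 < z) : ν (Iio z) = ENNReal.ofReal (frechetCDF l θ z) := by
  rw [h.eq_map_frechetQuantile hl hθ,
    Measure.map_apply (measurable_frechetQuantile l θ) measurableSet_Iio,
    Measure.restrict_apply' measurableSet_Ioo, frechetQuantile_preimage_Iio_inter hl hθ hz,
    volume_Ioo, sub_zero]

lemma lintegral_frechetCDF [IsFiniteMeasure ν] (h : HasFrechetCDF ν l θ) (hl : 0 < l)
    (hθ : 0 < θ) {a : ℝ} (ha : 0 ≤ a) :
    ∫⁻ z, ENNReal.ofReal (frechetCDF a θ z) ∂ν = ENNReal.ofReal (l / (l + a)) := by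
  have hquantile : ∀ u ∈ Ioo (0 : ℝ) 1,
      ENNReal.ofReal (frechetCDF a θ (frechetQuantile l θ u)) = ENNReal.ofReal (u ^ (a / l)) := by
    intro u hu
    rw [frechetCDF, frechetQuantile_rpow_neg hl hθ.ne' hu, rpow_def_of_pos hu.1]
    congr 2
    field_simp
  have hc : -1 < a / l := by linarith [div_nonneg ha hl.le]
  rw [h.eq_map_frechetQuantile hl hθ, lintegral_map (by unfold frechetCDF; fun_prop)
    (measurable_frechetQuantile l θ), setLIntegral_congr_fun measurableSet_Ioo hquantile,
    setLIntegral_Ioo_zero_one_rpow hc]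
  congr 1
  field_simp
  ring

lemma map_div (h : HasFrechetCDF ν l θ) {x : ℝ} (hx : 0 < x) :
    HasFrechetCDF (ν.map (· / x)) (l * x ^ (-θ)) θ := by
  intro z hz
  have hpre : (· / x) ⁻¹' Iic z = Iic (x * z) := by
    ext w
    simp [div_le_iff₀ hx, mul_comm]
  rw [Measure.map_apply (measurable_div_const x) measurableSet_Iic, hpre,
    h _ (mul_pos hx hz), frechetCDF, frechetCDF, mul_rpow hx.le hz.le]
  ring_nf

end HasFrechetCDF

end Frechet

namespace ProbabilityTheory

lemma IndepFun.measure_preimage_prodMk {Ω α β : Type*} [MeasurableSpace Ω] [MeasurableSpace α]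
    [MeasurableSpace β] {μ : Measure Ω} [IsFiniteMeasure μ] {X : Ω → α} {Y : Ω → β}
    (hXY : IndepFun X Y μ) (hX : Measurable X) (hY : Measurable Y) {T : Set (α × β)}
    (hT : MeasurableSet T) :
    μ ((fun ω => (X ω, Y ω)) ⁻¹' T) = ∫⁻ x, μ (Y ⁻¹' (Prod.mk x ⁻¹' T)) ∂(μ.map X) := by
  rw [← Measure.map_apply (hX.prodMk hY) hT,
    (indepFun_iff_map_prod_eq_prod_map_map hX.aemeasurable hY.aemeasurable).1 hXY,
    Measure.prod_apply hT]
  simp only [Measure.map_apply hY (measurable_prodMk_left hT)]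

lemma iIndepFun.measure_forall_lt_eq_lintegral {ι Ω : Type*} [Fintype ι] [DecidableEq ι]
    [MeasurableSpace Ω] {μ : Measure Ω} {W : ι → Ω → ℝ} (hindep : iIndepFun W μ)
    (hW : ∀ n, Measurable (W n)) (s : ι) :
    μ {ω | ∀ n ≠ s, W n ω < W s ω}
      = ∫⁻ w, ∏ n ∈ Finset.univ.erase s, μ.map (W n) (Iio w) ∂(μ.map (W s)) := by
  have := hindep.isProbabilityMeasure
  set S := Finset.univ.erase s
  let Y : Ω → (S → ℝ) := fun ω n => W n ω
  have hY : Measurable Y := measurable_pi_lambda _ fun n => hW n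
  have hXY : IndepFun (W s) Y μ :=
    (hindep.indepFun_finset {s} S (Finset.disjoint_singleton_left.2 (Finset.notMem_erase s _))
      hW).comp (measurable_pi_apply (⟨s, Finset.mem_singleton_self s⟩ : ({s} : Finset ι)))
      measurable_id
  let T : Set (ℝ × (S → ℝ)) := {p | ∀ n, p.2 n < p.1}
  have hT : MeasurableSet T := by
    simp only [T, ofPred_forall]
    exact MeasurableSet.iInter fun n => measurableSet_lt (by fun_prop) (by fun_prop)
  have hevent : {ω | ∀ n ≠ s, W n ω < W s ω} = (fun ω => (W s ω, Y ω)) ⁻¹' T := by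
    ext ω
    simp [T, Y, S]
  rw [hevent, hXY.measure_preimage_prodMk (hW s) hY hT]
  refine lintegral_congr fun w => ?_
  have hsection : Y ⁻¹' (Prod.mk w ⁻¹' T) = ⋂ n ∈ S, W n ⁻¹' Iio w := by
    ext ω
    simp [T, Y]
  rw [hsection, hindep.meas_biInter fun n _ => ⟨Iio w, measurableSet_Iio, rfl⟩]
  exact Finset.prod_congr rfl fun n _ => (Measure.map_apply (hW n) measurableSet_Iio).symm

lemma iIndepFun.measure_forall_lt_eq_of_hasFrechetCDF {ι Ω : Type*} [Fintype ι]
    [MeasurableSpace Ω] {μ : Measure Ω} {W : ι → Ω → ℝ} (hindep : iIndepFun W μ)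
    (hW : ∀ n, Measurable (W n)) {θ : ℝ} (hθ : 0 < θ) {a : ι → ℝ} (ha : ∀ n, 0 < a n)
    (hcdf : ∀ n, HasFrechetCDF (μ.map (W n)) (a n) θ) (s : ι) :
    μ {ω | ∀ n ≠ s, W n ω < W s ω} = ENNReal.ofReal (a s / ∑ n, a n) := by
  classical
  have := hindep.isProbabilityMeasure
  have hprod : ∀ w > 0, ∏ n ∈ Finset.univ.erase s, μ.map (W n) (Iio w)
      = ENNReal.ofReal (frechetCDF (∑ n ∈ Finset.univ.erase s, a n) θ w) := by
    intro w hw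
    rw [← prod_frechetCDF, ENNReal.ofReal_prod_of_nonneg fun _ _ => frechetCDF_pos.le]
    exact Finset.prod_congr rfl fun n _ => (hcdf n).measure_Iio (ha n) hθ hw
  rw [hindep.measure_forall_lt_eq_lintegral hW s,
    lintegral_congr_ae (((hcdf s).ae_pos (ha s) hθ).mono hprod),
    (hcdf s).lintegral_frechetCDF (ha s) hθ (Finset.sum_nonneg fun n _ => (ha n).le),
    Finset.add_sum_erase _ _ (Finset.mem_univ s)]

end ProbabilityTheory

theorem frechet_trade_share_general {ι : Type*} [Fintype ι]
    {Ω : Type*} [MeasurableSpace Ω] (μ : Measure Ω)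
    (θ : ℝ) (hθ : 0 < θ) (lam x : ι → ℝ)
    (hlam : ∀ n, 0 < lam n) (hx : ∀ n, 0 < x n)
    (Z : ι → Ω → ℝ) (hmeas : ∀ n, Measurable (Z n))
    (hindep : iIndepFun Z μ)
    (hcdf : ∀ n, ∀ z > (0 : ℝ),
      μ {ω | Z n ω ≤ z} = ENNReal.ofReal (Real.exp (-(lam n) * z ^ (-θ))))
    (s : ι) :
    μ {ω | ∀ n, n ≠ s → x s / Z s ω < x n / Z n ω}
      = ENNReal.ofReal (lam s * x s ^ (-θ) / ∑ n, lam n * x n ^ (-θ)) := by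
  have hlaw : ∀ n, HasFrechetCDF (μ.map (Z n)) (lam n) θ := fun n z hz => by
    rw [Measure.map_apply (hmeas n) measurableSet_Iic]
    exact hcdf n z hz
  have hpos : ∀ᵐ ω ∂μ, ∀ n, 0 < Z n ω := ae_all_iff.2 fun n =>
    ae_of_ae_map (hmeas n).aemeasurable ((hlaw n).ae_pos (hlam n) hθ)
  have hscaled : ∀ n, HasFrechetCDF (μ.map fun ω => Z n ω / x n) (lam n * x n ^ (-θ)) θ :=
    fun n => by
      have := (hlaw n).map_div (hx n)
      rwa [Measure.map_map (measurable_div_const (x n)) (hmeas n)] at this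
  calc μ {ω | ∀ n, n ≠ s → x s / Z s ω < x n / Z n ω}
      = μ {ω | ∀ n ≠ s, Z n ω / x n < Z s ω / x s} := by
        refine measure_congr (hpos.mono fun ω hω => ?_)
        simp only [eq_iff_iff]
        refine forall₂_congr fun n _ => ?_
        rw [div_lt_div_iff₀ (hω s) (hω n), div_lt_div_iff₀ (hx n) (hx s), mul_comm (Z n ω),
          mul_comm (Z s ω)]
    _ = _ :=
      (hindep.comp _ fun n => measurable_div_const (x n)).measure_forall_lt_eq_of_hasFrechetCDF
        (fun n => (hmeas n).div_const _) hθ (fun n => mul_pos (hlam n) (rpow_pos_of_pos (hx n) _))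
        hscaled s

/-- **Trade shares as sourcing probabilities.** With independent Fréchet productivity
draws `Z n` (location `λ n`, shape `θ`) and landed input-bundle costs `x n`, the
probability that source `s` offers the strictly lowest delivered cost `x s / Z s`
equals its trade share `λ s * x s ^ (-θ) / ∑ n, λ n * x n ^ (-θ)`. -/
theorem frechet_trade_share {ι : Type*} [Fintype ι] [Nonempty ι]
    {Ω : Type*} [MeasurableSpace Ω] (μ : Measure Ω) [IsProbabilityMeasure μ]
    (θ : ℝ) (hθ : 0 < θ) (lam x : ι → ℝ)
    (hlam : ∀ n, 0 < lam n) (hx : ∀ n, 0 < x n)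
    (Z : ι → Ω → ℝ) (hmeas : ∀ n, Measurable (Z n))
    (hindep : iIndepFun Z μ)
    (hcdf : ∀ n, ∀ z > (0 : ℝ),
      μ {ω | Z n ω ≤ z} = ENNReal.ofReal (Real.exp (-(lam n) * z ^ (-θ))))
    (s : ι) :
    μ {ω | ∀ n, n ≠ s → x s / Z s ω < x n / Z n ω}
      = ENNReal.ofReal (lam s * x s ^ (-θ) / ∑ n, lam n * x n ^ (-θ)) :=
  frechet_trade_share_general μ θ hθ lam x hlam hx Z hmeas hindep hcdf s
end

section
/- Let σ > 1 and θ > σ − 1, and set m = σ/(σ−1). Then ∫₀^∞ ∫₀^{η₂} (min(m^{θ} η₁, η₂))^{(1−σ)/θ} e^{−η₂} dη₁ dη₂ = [1 − m^{−θ} + (θ/(1−σ+θ)) m^{−θ}] · Γ((1−σ)/θ + 2), where Γ is the Gamma function. -/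
open MeasureTheory

/-- Inner integral computation. -/
lemma inner_calc (σ θ : ℝ) (hσ : 1 < σ) (hθ : σ - 1 < θ) (x : ℝ) (hx : 0 < x) :
    (∫ t in (0:ℝ)..x, (min ((σ / (σ - 1)) ^ θ * t) x) ^ ((1 - σ) / θ))
      = (1 - (σ / (σ - 1)) ^ (-θ) + (θ / (1 - σ + θ)) * (σ / (σ - 1)) ^ (-θ)) *
          x ^ ((1 - σ) / θ + 1) := by
  set m : ℝ := σ / (σ - 1) with hm_def
  have hσ0 : 0 < σ - 1 := by linarith
  have hm : 1 < m := by
    rw [hm_def, lt_div_iff₀ hσ0]; linarith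
  have hm0 : 0 < m := lt_trans one_pos hm
  have hθ0 : 0 < θ := lt_of_le_of_lt (by linarith) hθ
  set M : ℝ := m ^ θ with hM_def
  have hM1 : 1 < M := Real.one_lt_rpow_iff_of_pos hm0 |>.mpr (Or.inl ⟨hm, hθ0⟩)
  have hM0 : 0 < M := lt_trans one_pos hM1
  set a : ℝ := (1 - σ) / θ with ha_def
  have ha : -1 < a := by
    rw [ha_def, lt_div_iff₀ hθ0]; linarith
  have ha1 : 0 < a + 1 := by linarith
  set c : ℝ := x / M with hc_def
  have hc0 : 0 < c := div_pos hx hM0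
  have hcx : c < x := by
    rw [hc_def, div_lt_iff₀ hM0]; nlinarith
  have hMc : M * c = x := by
    rw [hc_def]; field_simp
  -- pointwise forms on the two pieces
  have h1 : ∫ t in (0:ℝ)..c, (min (M * t) x) ^ a = ∫ t in (0:ℝ)..c, M ^ a * t ^ a := by
    apply intervalIntegral.integral_congr
    intro t ht
    rw [Set.uIcc_of_le hc0.le] at ht
    have ht0 : 0 ≤ t := ht.1
    have hle : M * t ≤ x := by
      calc M * t ≤ M * c := mul_le_mul_of_nonneg_left ht.2 hM0.le
        _ = x := hMc
    dsimp only
    rw [min_eq_left hle, Real.mul_rpow hM0.le ht0]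
  have h2 : ∫ t in c..x, (min (M * t) x) ^ a = ∫ t in c..x, x ^ a := by
    apply intervalIntegral.integral_congr
    intro t ht
    rw [Set.uIcc_of_le hcx.le] at ht
    have hle : x ≤ M * t := by
      calc x = M * c := hMc.symm
        _ ≤ M * t := mul_le_mul_of_nonneg_left ht.1 hM0.le
    dsimp only
    rw [min_eq_right hle]
  -- integrability
  have i1' : IntervalIntegrable (fun t : ℝ => M ^ a * t ^ a) volume 0 c :=
    (intervalIntegral.intervalIntegrable_rpow' ha).const_mul _
  have i1 : IntervalIntegrable (fun t : ℝ => (min (M * t) x) ^ a) volume 0 c := by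
    rw [intervalIntegrable_iff] at i1' ⊢
    apply i1'.congr_fun _ measurableSet_uIoc
    intro t ht
    rw [Set.uIoc_of_le hc0.le] at ht
    have ht0 : 0 < t := ht.1
    have hle : M * t ≤ x := by
      calc M * t ≤ M * c := mul_le_mul_of_nonneg_left ht.2 hM0.le
        _ = x := hMc
    dsimp only
    rw [min_eq_left hle, Real.mul_rpow hM0.le ht0.le]
  have i2 : IntervalIntegrable (fun t : ℝ => (min (M * t) x) ^ a) volume c x := by
    have i2' : IntervalIntegrable (fun _ : ℝ => x ^ a) volume c x := intervalIntegrable_const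
    rw [intervalIntegrable_iff] at i2' ⊢
    apply i2'.congr_fun _ measurableSet_uIoc
    intro t ht
    rw [Set.uIoc_of_le hcx.le] at ht
    have hle : x ≤ M * t := by
      calc x = M * c := hMc.symm
        _ ≤ M * t := mul_le_mul_of_nonneg_left ht.1.le hM0.le
    dsimp only
    rw [min_eq_right hle]
  have split : (∫ t in (0:ℝ)..x, (min (M * t) x) ^ a)
      = (∫ t in (0:ℝ)..c, (min (M * t) x) ^ a) + ∫ t in c..x, (min (M * t) x) ^ a :=
    (intervalIntegral.integral_add_adjacent_intervals i1 i2).symm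
  have v1 : ∫ t in (0:ℝ)..c, M ^ a * t ^ a = M ^ a * (c ^ (a + 1) / (a + 1)) := by
    rw [intervalIntegral.integral_const_mul, integral_rpow (Or.inl ha),
      Real.zero_rpow (by linarith : a + 1 ≠ 0)]
    try ring
  have v2 : ∫ t in c..x, (x:ℝ) ^ a = (x - c) * x ^ a := by
    rw [intervalIntegral.integral_const, smul_eq_mul]
  rw [split, h1, h2, v1, v2]
  -- algebra
  have hxa : x ^ a * x = x ^ (a + 1) := by
    rw [Real.rpow_add_one hx.ne' a]; try ring
  have hca : c ^ (a + 1) = x ^ (a + 1) / M ^ (a + 1) := by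
    rw [hc_def, Real.div_rpow hx.le hM0.le]
  have hMinv : m ^ (-θ) = M⁻¹ := by
    rw [hM_def, Real.rpow_neg hm0.le]
  have hMa : M ^ a / M ^ (a + 1) = M⁻¹ := by
    rw [← Real.rpow_sub hM0]
    simp [Real.rpow_neg_one]
  have hfrac : θ / (1 - σ + θ) = 1 / (a + 1) := by
    rw [ha_def]
    field_simp
    try ring
  rw [hMinv, hca, hfrac]
  have e1 : M ^ a * (x ^ (a + 1) / M ^ (a + 1) / (a + 1)) = 1 / (a + 1) * M⁻¹ * x ^ (a + 1) := by
    rw [show M ^ a * (x ^ (a + 1) / M ^ (a + 1) / (a + 1))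
        = M ^ a / M ^ (a + 1) * (1 / (a + 1)) * x ^ (a + 1) from by ring, hMa]
    ring
  have e2 : (x - c) * x ^ a = x ^ (a + 1) - M⁻¹ * x ^ (a + 1) := by
    rw [← hxa, hc_def]
    field_simp
  rw [e1, e2]
  ring

/-- **Change-of-variables integral for the sectoral price index** under Bertrand
competition: with markup `m = σ/(σ-1)`,
`∫₀^∞ ∫₀^{η₂} (min (m^θ η₁) η₂)^{(1-σ)/θ} e^{-η₂} dη₁ dη₂
  = [1 - m^{-θ} + (θ/(1-σ+θ)) m^{-θ}] Γ((1-σ)/θ + 2)`. -/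
theorem price_index_integral (σ θ : ℝ) (hσ : 1 < σ) (hθ : σ - 1 < θ) :
    (∫ η₂ in Set.Ioi (0 : ℝ), ∫ η₁ in (0 : ℝ)..η₂,
        (min ((σ / (σ - 1)) ^ θ * η₁) η₂) ^ ((1 - σ) / θ) * Real.exp (-η₂))
      = (1 - (σ / (σ - 1)) ^ (-θ) + (θ / (1 - σ + θ)) * (σ / (σ - 1)) ^ (-θ)) *
          Real.Gamma ((1 - σ) / θ + 2) := by
  have hθ0 : 0 < θ := lt_of_le_of_lt (by linarith) hθ
  set a : ℝ := (1 - σ) / θ with ha_def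
  have ha : -1 < a := by
    rw [ha_def, lt_div_iff₀ hθ0]; linarith
  set K : ℝ := 1 - (σ / (σ - 1)) ^ (-θ) + (θ / (1 - σ + θ)) * (σ / (σ - 1)) ^ (-θ) with hK
  have step1 : (∫ η₂ in Set.Ioi (0 : ℝ), ∫ η₁ in (0 : ℝ)..η₂,
        (min ((σ / (σ - 1)) ^ θ * η₁) η₂) ^ a * Real.exp (-η₂))
      = ∫ η₂ in Set.Ioi (0 : ℝ), K * (Real.exp (-η₂) * η₂ ^ (a + 2 - 1)) := by
    apply setIntegral_congr_fun measurableSet_Ioi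
    intro x hx
    simp only [Set.mem_Ioi] at hx
    dsimp only
    rw [intervalIntegral.integral_mul_const, inner_calc σ θ hσ hθ x hx]
    have : a + 2 - 1 = a + 1 := by ring
    rw [this]; ring
  rw [step1, integral_const_mul, Real.Gamma_eq_integral (by linarith : (0:ℝ) < a + 2)]
end

section
/- Let θ > 0, σ > 1 with θ > σ − 1, λ > 0, π ∈ (0,1], and x̃ > 0, and set m = σ/(σ−1). Then ∫₀^∞ ∫_{z₂}^∞ (min(m · x̃/z₁, x̃/z₂))^{1−σ} · (1/π) · exp(−(λ/π) z₂^{−θ}) · (θ λ z₁^{−θ−1}) · (θ λ z₂^{−θ−1}) dz₁ dz₂ = [1 − (σ−1)/θ + ((σ−1)/θ) m^{−θ}] · Γ((1−σ+θ)/θ) · π · (λ x̃^{−θ} / π)^{(σ−1)/θ}, where Γ is the Gamma function. -/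
/-!
For fixed `z₂` the integrand in `z₁` is a power of `z₁` on each side of `m z₂` (limit pricing
below, monopoly pricing above), so the inner integral is `x̃^{1-σ} z₂^{σ-1-θ}` times a constant.
What is left is the moment of order `σ - 1 - θ` of the Fréchet law with location `λ/π`, which
the substitution `t = z₂^{-θ}` turns into a Gamma integral; `Γ(s + 1) = s Γ(s)` then produces the
bracket.
-/

open MeasureTheory Set Real

noncomputable def frechetDensity (θ w z : ℝ) : ℝ :=
  θ * w * z ^ (-θ - 1) * exp (-(w * z ^ (-θ)))

/-- The kernel of a Pareto law of shape `θ`, taken on all of `(0, ∞)` (no indicator of the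
support). -/
noncomputable def paretoDensity (θ z : ℝ) : ℝ :=
  θ * z ^ (-θ - 1)

theorem integral_Ioi_rpow_mul_frechetDensity {θ w r : ℝ} (hθ : 0 < θ) (hw : 0 < w)
    (hr : r < θ) :
    ∫ z in Ioi 0, z ^ r * frechetDensity θ w z = w ^ (r / θ) * Gamma (1 - r / θ) := by
  have ha : 0 < 1 - r / θ := by rw [sub_pos, div_lt_one hθ]; exact hr
  have hsubst : EqOn (fun z => z ^ r * frechetDensity θ w z)
      (fun z => (|-θ| * z ^ (-θ - 1)) •
        (w * ((z ^ (-θ)) ^ (1 - r / θ - 1) * exp (-(w * z ^ (-θ)))))) (Ioi 0) := by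
    intro z hz
    have hpow : (z ^ (-θ)) ^ (1 - r / θ - 1) = z ^ r := by
      rw [← rpow_mul hz.le]
      congr 1
      field_simp
      ring
    simp only [frechetDensity, smul_eq_mul, hpow, abs_neg, abs_of_pos hθ]
    ring
  rw [setIntegral_congr_fun measurableSet_Ioi hsubst,
    integral_comp_rpow_Ioi (fun t => w * (t ^ (1 - r / θ - 1) * exp (-(w * t))))
      (neg_ne_zero.mpr hθ.ne'), integral_const_mul,
    integral_rpow_mul_exp_neg_mul_Ioi ha hw, ← mul_assoc, one_div, inv_rpow hw.le,
    ← rpow_neg hw.le]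
  congr 1
  conv_rhs => rw [show r / θ = 1 + -(1 - r / θ) by ring]
  rw [rpow_add hw, rpow_one]

theorem rpow_mul_paretoDensity {θ r z : ℝ} (hz : 0 < z) :
    z ^ r * paretoDensity θ z = θ * z ^ (r - θ - 1) := by
  rw [paretoDensity, mul_left_comm, ← rpow_add hz]
  ring_nf

theorem integrableOn_Ioi_rpow_mul_paretoDensity {θ r c : ℝ} (hc : 0 < c) (hr : r < θ) :
    IntegrableOn (fun z => z ^ r * paretoDensity θ z) (Ioi c) :=
  IntegrableOn.congr_fun ((integrableOn_Ioi_rpow_of_lt (by linarith) hc).const_mul θ)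
    (fun z hz => (rpow_mul_paretoDensity (hc.trans hz)).symm) measurableSet_Ioi

theorem integral_Ioi_rpow_mul_paretoDensity {θ r c : ℝ} (hc : 0 < c) (hr : r < θ) :
    ∫ z in Ioi c, z ^ r * paretoDensity θ z = θ / (θ - r) * c ^ (r - θ) := by
  rw [setIntegral_congr_fun measurableSet_Ioi fun z hz => rpow_mul_paretoDensity (hc.trans hz),
    integral_const_mul, integral_Ioi_rpow_of_lt (by linarith) hc,
    show r - θ - 1 + 1 = r - θ by ring, neg_div, ← div_neg, neg_sub]
  ring

theorem intervalIntegral_paretoDensity {θ a b : ℝ} (hθ : 0 < θ) (ha : 0 < a) (hb : 0 < b) :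
    ∫ z in a..b, paretoDensity θ z = a ^ (-θ) - b ^ (-θ) := by
  have htail := fun c (hc : 0 < c) => integral_Ioi_rpow_mul_paretoDensity (r := 0) hc hθ
  have hint := fun c (hc : 0 < c) => integrableOn_Ioi_rpow_mul_paretoDensity (r := 0) hc hθ
  simp only [rpow_zero, one_mul, sub_zero, div_self hθ.ne', zero_sub] at htail hint
  rw [← intervalIntegral.integral_Ioi_sub_Ioi' (hint a ha) (hint b hb), htail a ha, htail b hb]

theorem min_mul_div_div_eq_right {m x z₁ z₂ : ℝ} (hx : 0 ≤ x) (hz₂ : 0 < z₂) (hz₁ : z₂ ≤ z₁)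
    (h : z₁ ≤ m * z₂) : min (m * x / z₁) (x / z₂) = x / z₂ := by
  refine min_eq_right ?_
  rw [div_le_div_iff₀ hz₂ (hz₂.trans_le hz₁)]
  nlinarith [mul_le_mul_of_nonneg_left h hx]

theorem min_mul_div_div_eq_left {m x z₁ z₂ : ℝ} (hx : 0 ≤ x) (hz₂ : 0 < z₂) (hz₁ : 0 < z₁)
    (h : m * z₂ ≤ z₁) : min (m * x / z₁) (x / z₂) = m * x / z₁ := by
  refine min_eq_left ?_
  rw [div_le_div_iff₀ hz₁ hz₂]
  nlinarith [mul_le_mul_of_nonneg_left h hx]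

theorem integral_Ioi_min_div_rpow_mul_paretoDensity {θ σ m x z₂ : ℝ} (hθ : 0 < θ)
    (hθσ : σ - 1 < θ) (hm : 1 ≤ m) (hx : 0 ≤ x) (hz₂ : 0 < z₂) :
    ∫ z₁ in Ioi z₂, min (m * x / z₁) (x / z₂) ^ (1 - σ) * paretoDensity θ z₁
      = x ^ (1 - σ) * z₂ ^ (σ - 1 - θ) * (1 - m ^ (-θ) + m ^ (-θ) * θ / (θ + 1 - σ)) := by
  have hm0 : 0 < m := zero_lt_one.trans_le hm
  have hb : z₂ ≤ m * z₂ := le_mul_of_one_le_left hz₂.le hm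
  have hb0 : 0 < m * z₂ := hz₂.trans_le hb
  have hnear : EqOn (fun z₁ => min (m * x / z₁) (x / z₂) ^ (1 - σ) * paretoDensity θ z₁)
      (fun z₁ => (x / z₂) ^ (1 - σ) * paretoDensity θ z₁) (uIcc z₂ (m * z₂)) := by
    intro z₁ hz₁
    rw [uIcc_of_le hb] at hz₁
    simp only [min_mul_div_div_eq_right hx hz₂ hz₁.1 hz₁.2]
  have hfar : EqOn (fun z₁ => min (m * x / z₁) (x / z₂) ^ (1 - σ) * paretoDensity θ z₁)
      (fun z₁ => (m * x) ^ (1 - σ) * (z₁ ^ (σ - 1) * paretoDensity θ z₁)) (Ioi (m * z₂)) := by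
    intro z₁ hz₁
    have hz₁0 : 0 < z₁ := hb0.trans hz₁
    simp only [min_mul_div_div_eq_left hx hz₂ hz₁0 hz₁.le]
    rw [div_rpow (by positivity) hz₁0.le, div_eq_mul_inv, ← rpow_neg hz₁0.le, neg_sub, mul_assoc]
  have hnear_int : IntervalIntegrable
      (fun z₁ => min (m * x / z₁) (x / z₂) ^ (1 - σ) * paretoDensity θ z₁) volume z₂ (m * z₂) :=
    (((intervalIntegral.intervalIntegrable_rpow (Or.inr (by
      rw [uIcc_of_le hb]; exact fun h => (hz₂.trans_le h.1).false))).const_mul θ).const_mul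
        ((x / z₂) ^ (1 - σ))).congr_uIoo (hnear.symm.mono uIoo_subset_uIcc_self)
  have hfar_int : IntegrableOn
      (fun z₁ => min (m * x / z₁) (x / z₂) ^ (1 - σ) * paretoDensity θ z₁) (Ioi (m * z₂)) :=
    IntegrableOn.congr_fun ((integrableOn_Ioi_rpow_mul_paretoDensity hb0 hθσ).const_mul _)
      hfar.symm measurableSet_Ioi
  rw [← intervalIntegral.integral_interval_add_Ioi' hnear_int hfar_int,
    intervalIntegral.integral_congr hnear, setIntegral_congr_fun measurableSet_Ioi hfar,
    intervalIntegral.integral_const_mul, integral_const_mul,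
    intervalIntegral_paretoDensity hθ hz₂ hb0, integral_Ioi_rpow_mul_paretoDensity hb0 hθσ,
    div_rpow hx hz₂.le, mul_rpow hm0.le hx, mul_rpow hm0.le hz₂.le, mul_rpow hm0.le hz₂.le,
    show θ - (σ - 1) = θ + 1 - σ by ring, show σ - 1 - θ = -θ - (1 - σ) by ring,
    rpow_sub hz₂ (-θ), rpow_sub hm0 (-θ)]
  have hne : θ + 1 - σ ≠ 0 := by linarith
  field_simp

theorem joint_density_eq_paretoDensity_mul_frechetDensity (θ lam p z₁ z₂ : ℝ) :
    (1 / p) * exp (-(lam / p) * z₂ ^ (-θ)) * (θ * lam * z₁ ^ (-θ - 1)) *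
        (θ * lam * z₂ ^ (-θ - 1))
      = paretoDensity θ z₁ * (lam * frechetDensity θ (lam / p) z₂) := by
  simp only [paretoDensity, frechetDensity, neg_mul]
  ring

/-- **Source contribution to the CES price index under Bertrand competition.**
A variety won by a source with Fréchet location `λ`, shape `θ`, trade share `p`
and landed cost `x̃` sells at `min (m x̃ / z₁) (x̃ / z₂)` with `m = σ/(σ-1)`;
integrating the price to the power `1-σ` against the joint density of
`(z₁, z₂)` yields
`[1 - (σ-1)/θ + ((σ-1)/θ) m^{-θ}] Γ((1-σ+θ)/θ) p (λ x̃^{-θ}/p)^{(σ-1)/θ}`. -/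
theorem price_contribution_integral (θ σ lam p x : ℝ)
    (hθ : 0 < θ) (hσ : 1 < σ) (hθσ : σ - 1 < θ) (hlam : 0 < lam)
    (hp : p ∈ Set.Ioc (0 : ℝ) 1) (hx : 0 < x) :
    (∫ z₂ in Set.Ioi (0 : ℝ), ∫ z₁ in Set.Ioi z₂,
        (min ((σ / (σ - 1)) * x / z₁) (x / z₂)) ^ (1 - σ) *
          ((1 / p) * Real.exp (-(lam / p) * z₂ ^ (-θ)) *
            (θ * lam * z₁ ^ (-θ - 1)) * (θ * lam * z₂ ^ (-θ - 1))))
      = (1 - (σ - 1) / θ + ((σ - 1) / θ) * (σ / (σ - 1)) ^ (-θ)) *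
          Real.Gamma ((1 - σ + θ) / θ) * p * (lam * x ^ (-θ) / p) ^ ((σ - 1) / θ) := by
  have hw : 0 < lam / p := div_pos hlam hp.1
  have hm : 1 ≤ σ / (σ - 1) := by rw [le_div_iff₀ (by linarith)]; linarith
  set C := 1 - (σ / (σ - 1)) ^ (-θ) + (σ / (σ - 1)) ^ (-θ) * θ / (θ + 1 - σ)
  simp_rw [joint_density_eq_paretoDensity_mul_frechetDensity, ← mul_assoc (min _ _ ^ _),
    integral_mul_const]
  rw [setIntegral_congr_fun measurableSet_Ioi
      (g := fun z₂ => (x ^ (1 - σ) * C * lam) * (z₂ ^ (σ - 1 - θ) * frechetDensity θ (lam / p) z₂))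
      fun z₂ hz₂ => by
        rw [integral_Ioi_min_div_rpow_mul_paretoDensity hθ hθσ hm hx.le hz₂]
        ring,
    integral_const_mul, integral_Ioi_rpow_mul_frechetDensity hθ hw (by linarith)]
  have hs : (1 - σ + θ) / θ ≠ 0 := (div_pos (by linarith) hθ).ne'
  have hne : θ + 1 - σ ≠ 0 := by linarith
  have hprice : (lam * x ^ (-θ) / p) ^ ((σ - 1) / θ) = (lam / p) ^ ((σ - 1) / θ) * x ^ (1 - σ) := by
    rw [mul_div_right_comm, mul_rpow hw.le (rpow_nonneg hx.le _), ← rpow_mul hx.le]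
    congr 2
    field_simp
    ring
  have hC : C * ((1 - σ + θ) / θ) = 1 - (σ - 1) / θ + (σ - 1) / θ * (σ / (σ - 1)) ^ (-θ) := by
    simp only [C]
    field_simp
    ring
  rw [show 1 - (σ - 1 - θ) / θ = (1 - σ + θ) / θ + 1 by field_simp; ring,
    show (σ - 1 - θ) / θ = (σ - 1) / θ - 1 by field_simp, Gamma_add_one hs,
    rpow_sub_one hw.ne', hprice, ← hC]
  field_simp
end

section
/- Let θ > 0, σ > 1 with θ > σ − 1, λ > 0, π ∈ (0,1], and x̃ > 0, and set m = σ/(σ−1). Then ∫₀^∞ ∫_{z₂}^∞ (x̃/z₁) · (min(m · x̃/z₁, x̃/z₂))^{−σ} · (1/π) · exp(−(λ/π) z₂^{−θ}) · (θ λ z₁^{−θ−1}) · (θ λ z₂^{−θ−1}) dz₁ dz₂ = [1 − σ/(1+θ) + (σ/(1+θ)) m^{−(1+θ)}] · Γ((1−σ+θ)/θ) · π · (λ x̃^{−θ} / π)^{(σ−1)/θ}, where Γ is the Gamma function. -/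
/-!
Splitting the inner integral at `z₁ = m z₂` (below it the rival's limit price `x̃ / z₂` binds,
above it the markup price `m x̃ / z₁`) leaves a power of `z₁` on each piece, so the inner integral
is `z₂ ^ (σ - 1 - θ)` times a constant. The outer integral is then a moment of the Fréchet density,
`∫ z ^ (-θ s - 1) e ^ (-b z ^ (-θ)) dz = Γ(s) b ^ (-s) / θ` (substitute `u = z ^ (-θ)`), at
`s = a + 1` with `a = (1 - σ + θ) / θ`, and `Γ(a + 1) = a Γ(a)` cancels the factor
`1 / (1 + θ - σ)` left by the inner integral.
-/

open MeasureTheory Real Set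

section CostIntegrand

variable {θ σ m x z : ℝ}

lemma eqOn_cost_mul_demand_uIcc (hm : 1 ≤ m) (hx : 0 < x) (hz : 0 < z) :
    EqOn (fun z₁ => x / z₁ * min (m * x / z₁) (x / z) ^ (-σ) * z₁ ^ (-θ - 1))
      (fun z₁ => x ^ (1 - σ) * z ^ σ * z₁ ^ (-θ - 2)) (uIcc z (m * z)) := by
  intro z₁ hz₁
  rw [uIcc_of_le (le_mul_of_one_le_left hz.le hm)] at hz₁
  have hz₁_pos : 0 < z₁ := hz.trans_le hz₁.1
  have hmin : min (m * x / z₁) (x / z) = x / z := by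
    refine min_eq_right ((div_le_div_iff₀ hz hz₁_pos).2 ?_)
    nlinarith [hz₁.2]
  simp only [hmin]
  rw [div_rpow hx.le hz.le, rpow_neg hz.le, div_inv_eq_mul,
    show 1 - σ = 1 + -σ by ring, rpow_add hx, rpow_one,
    show -θ - 2 = -1 + (-θ - 1) by ring, rpow_add hz₁_pos, rpow_neg_one]
  ring

lemma eqOn_cost_mul_demand_Ioi (hm : 0 < m) (hx : 0 < x) (hz : 0 < z) :
    EqOn (fun z₁ => x / z₁ * min (m * x / z₁) (x / z) ^ (-σ) * z₁ ^ (-θ - 1))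
      (fun z₁ => x ^ (1 - σ) * m ^ (-σ) * z₁ ^ (σ - θ - 2)) (Ioi (m * z)) := by
  intro z₁ hz₁
  have hz₁_pos : 0 < z₁ := (mul_pos hm hz).trans hz₁
  have hmin : min (m * x / z₁) (x / z) = m * x / z₁ := by
    refine min_eq_left ((div_le_div_iff₀ hz₁_pos hz).2 ?_)
    nlinarith [mem_Ioi.mp hz₁]
  simp only [hmin]
  rw [div_rpow (by positivity) hz₁_pos.le, mul_rpow hm.le hx.le, rpow_neg hz₁_pos.le,
    div_inv_eq_mul, show 1 - σ = 1 + -σ by ring, rpow_add hx, rpow_one,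
    show σ - θ - 2 = (-1 + σ) + (-θ - 1) by ring, rpow_add hz₁_pos, rpow_add hz₁_pos,
    rpow_neg_one]
  ring

theorem integral_Ioi_cost_mul_demand (hm : 1 ≤ m) (hθ : 1 + θ ≠ 0) (hσθ : σ < 1 + θ)
    (hx : 0 < x) (hz : 0 < z) :
    ∫ z₁ in Ioi z, x / z₁ * min (m * x / z₁) (x / z) ^ (-σ) * z₁ ^ (-θ - 1)
      = x ^ (1 - σ) * z ^ (σ - 1 - θ) *
          (1 - σ / (1 + θ) + σ / (1 + θ) * m ^ (-(1 + θ))) / (1 + θ - σ) := by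
  have hm₀ : 0 < m := one_pos.trans_le hm
  have hmz : 0 < m * z := mul_pos hm₀ hz
  have h0 : (0 : ℝ) ∉ uIcc z (m * z) := notMem_uIcc_of_lt hz hmz
  have h_limit := eqOn_cost_mul_demand_uIcc (σ := σ) (θ := θ) hm hx hz
  have h_markup := eqOn_cost_mul_demand_Ioi (σ := σ) (θ := θ) hm₀ hx hz
  rw [← intervalIntegral.integral_interval_add_Ioi'
      (((intervalIntegral.intervalIntegrable_rpow (Or.inr h0)).const_mul _).congr
        (h_limit.symm.mono uIoc_subset_uIcc))
      (IntegrableOn.congr_fun ((integrableOn_Ioi_rpow_of_lt (by linarith) hmz).const_mul _)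
        h_markup.symm measurableSet_Ioi),
    intervalIntegral.integral_congr h_limit, setIntegral_congr_fun measurableSet_Ioi h_markup,
    intervalIntegral.integral_const_mul, integral_const_mul,
    integral_rpow (Or.inr ⟨by contrapose! hθ; linarith, h0⟩),
    integral_Ioi_rpow_of_lt (by linarith) hmz, mul_rpow hm₀.le hz.le, mul_rpow hm₀.le hz.le]
  have hz_pow : z ^ σ * z ^ (-(1 + θ)) = z ^ (σ - 1 - θ) := by
    rw [← rpow_add hz]; ring_nf
  have hm_pow : m ^ (-σ) * m ^ (σ - 1 - θ) = m ^ (-(1 + θ)) := by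
    rw [← rpow_add hm₀]; ring_nf
  rw [show -θ - 2 + 1 = -(1 + θ) by ring, show σ - θ - 2 + 1 = σ - 1 - θ by ring,
    ← hz_pow, ← hm_pow]
  have : 1 + θ - σ ≠ 0 := by linarith
  have : σ - 1 - θ ≠ 0 := by linarith
  have : -(1 + θ) ≠ 0 := neg_ne_zero.2 hθ
  field_simp
  ring

theorem integral_Ioi_cost_mul_demand_mul_density {lam p : ℝ} (hm : 1 ≤ m) (hθ : 1 + θ ≠ 0)
    (hσθ : σ < 1 + θ) (hx : 0 < x) (hz : 0 < z) :
    ∫ z₁ in Ioi z, x / z₁ * min (m * x / z₁) (x / z) ^ (-σ) *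
        (1 / p * exp (-(lam / p) * z ^ (-θ)) * (θ * lam * z₁ ^ (-θ - 1)) *
          (θ * lam * z ^ (-θ - 1)))
      = (θ * lam) ^ 2 / p * x ^ (1 - σ) *
          (1 - σ / (1 + θ) + σ / (1 + θ) * m ^ (-(1 + θ))) / (1 + θ - σ) *
            (z ^ (σ - 2 * θ - 2) * exp (-(lam / p) * z ^ (-θ))) := by
  have h_pow : z ^ (-θ - 1) * z ^ (σ - 1 - θ) = z ^ (σ - 2 * θ - 2) := by
    rw [← rpow_add hz]; ring_nf
  calc _ = 1 / p * exp (-(lam / p) * z ^ (-θ)) * (θ * lam) ^ 2 * z ^ (-θ - 1) *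
        ∫ z₁ in Ioi z, x / z₁ * min (m * x / z₁) (x / z) ^ (-σ) * z₁ ^ (-θ - 1) := by
        rw [← integral_const_mul]; congr 1; ext z₁; ring
    _ = _ := by
        rw [integral_Ioi_cost_mul_demand hm hθ hσθ hx hz, ← h_pow]
        ring

end CostIntegrand

theorem integral_rpow_mul_exp_neg_mul_rpow_neg {θ b s : ℝ} (hθ : 0 < θ) (hb : 0 < b)
    (hs : 0 < s) :
    ∫ z in Ioi (0 : ℝ), z ^ (-θ * s - 1) * exp (-b * z ^ (-θ)) = Gamma s * b ^ (-s) / θ := by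
  have h := integral_rpow_mul_exp_neg_mul_rpow one_pos (by linarith : -1 < s - 1) hb
  simp only [rpow_one, sub_add_cancel, div_one, mul_one] at h
  rw [← integral_comp_rpow_Ioi _ (neg_ne_zero.2 hθ.ne')] at h
  rw [mul_comm (Gamma s), ← h, ← integral_div]
  refine setIntegral_congr_fun measurableSet_Ioi fun z hz => ?_
  have hz : 0 < z := hz
  rw [smul_eq_mul, abs_neg, abs_of_pos hθ, ← rpow_mul hz.le,
    show -θ * s - 1 = (-θ - 1) + -θ * (s - 1) by ring, rpow_add hz]
  field_simp

/-- **Source production cost per unit of destination expenditure under Bertrand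
competition.** A variety won by a source with Fréchet location `λ`, shape `θ`,
trade share `p` and landed cost `x̃` sells at `min (m x̃ / z₁) (x̃ / z₂)` with
`m = σ/(σ-1)` and is produced at marginal cost `x̃ / z₁`; integrating the cost
times demand `price^{-σ}` against the joint density of `(z₁, z₂)` yields
`[1 - σ/(1+θ) + (σ/(1+θ)) m^{-(1+θ)}] Γ((1-σ+θ)/θ) p (λ x̃^{-θ}/p)^{(σ-1)/θ}`. -/
theorem cost_contribution_integral (θ σ lam p x : ℝ)
    (hθ : 0 < θ) (hσ : 1 < σ) (hθσ : σ - 1 < θ) (hlam : 0 < lam)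
    (hp : p ∈ Set.Ioc (0 : ℝ) 1) (hx : 0 < x) :
    (∫ z₂ in Set.Ioi (0 : ℝ), ∫ z₁ in Set.Ioi z₂,
        (x / z₁) * (min ((σ / (σ - 1)) * x / z₁) (x / z₂)) ^ (-σ) *
          ((1 / p) * Real.exp (-(lam / p) * z₂ ^ (-θ)) *
            (θ * lam * z₁ ^ (-θ - 1)) * (θ * lam * z₂ ^ (-θ - 1))))
      = (1 - σ / (1 + θ) + (σ / (1 + θ)) * (σ / (σ - 1)) ^ (-(1 + θ))) *
          Real.Gamma ((1 - σ + θ) / θ) * p * (lam * x ^ (-θ) / p) ^ ((σ - 1) / θ) := by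
  have hb : 0 < lam / p := div_pos hlam hp.1
  have hm : 1 ≤ σ / (σ - 1) := (one_le_div (by linarith)).2 (by linarith)
  set a := (1 - σ + θ) / θ with ha
  have ha₀ : 0 < a := div_pos (by linarith) hθ
  have h_θa : θ * a = 1 + θ - σ := by rw [ha]; field_simp; ring
  have h_exp : σ - 2 * θ - 2 = -θ * (a + 1) - 1 := by rw [ha]; field_simp; ring
  rw [setIntegral_congr_fun measurableSet_Ioi fun z hz =>
      integral_Ioi_cost_mul_demand_mul_density hm (by positivity) (by linarith) hx hz,
    integral_const_mul, h_exp, integral_rpow_mul_exp_neg_mul_rpow_neg hθ hb (by linarith),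
    Gamma_add_one ha₀.ne']
  have h_rhs : (lam * x ^ (-θ) / p) ^ ((σ - 1) / θ) = (lam / p) ^ (1 - a) * x ^ (1 - σ) := by
    rw [mul_div_right_comm, mul_rpow hb.le (rpow_nonneg hx.le _), ← rpow_mul hx.le]
    congr 2
    · rw [ha]; field_simp; ring
    · field_simp; ring
  have h_lhs : (lam / p) ^ (-(a + 1)) = (lam / p) ^ (1 - a) / (lam / p) ^ 2 := by
    rw [show -(a + 1) = (1 - a) + -2 by ring, rpow_add hb, rpow_neg hb.le, rpow_two]
    exact (div_eq_mul_inv _ _).symm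
  rw [h_rhs, h_lhs]
  field_simp
  rw [div_eq_iff (by linarith), ← h_θa]
  ring
end

section
/- Let σ > 1 and θ > σ − 1. Then [1 − σ/(1+θ) + (σ/(1+θ)) · ((σ−1)/σ)^{1+θ}] / [1 − (σ−1)/θ + ((σ−1)/θ) · ((σ−1)/σ)^{θ}] = θ/(1+θ). Equivalently, both bracketed expressions are positive and their ratio equals θ/(1+θ). -/
/-! With `r = (σ - 1)/σ` one has `σ r = σ - 1`, so splitting `r ^ (1 + θ) = r · r ^ θ` turns
`(1 + θ)` times the cost constant into `1 + θ - σ + (σ - 1) r ^ θ`, which is also `θ` times the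
revenue constant. The revenue constant is the convex combination `(1 - a) + a r ^ θ` with
`a = (σ - 1)/θ ∈ (0, 1)`, hence positive. -/

noncomputable section

namespace Bertrand

def costConstant (σ θ : ℝ) : ℝ :=
  1 - σ / (1 + θ) + (σ / (1 + θ)) * ((σ - 1) / σ) ^ (1 + θ)

def revenueConstant (σ θ : ℝ) : ℝ :=
  1 - (σ - 1) / θ + ((σ - 1) / θ) * ((σ - 1) / σ) ^ θ

variable {σ θ : ℝ}

theorem revenueConstant_pos (hσ : 1 < σ) (hθ : σ - 1 < θ) : 0 < revenueConstant σ θ := by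
  have hθ0 : 0 < θ := by linarith
  have ha0 : 0 < (σ - 1) / θ := div_pos (by linarith) hθ0
  have ha1 : (σ - 1) / θ < 1 := (div_lt_one hθ0).mpr hθ
  have hr : 0 < ((σ - 1) / σ) ^ θ := Real.rpow_pos_of_pos (div_pos (by linarith) (by linarith)) θ
  unfold revenueConstant
  nlinarith

theorem one_add_mul_costConstant (hσ : 1 ≤ σ) (hθ : 0 < θ) :
    (1 + θ) * costConstant σ θ = θ * revenueConstant σ θ := by
  have hσ0 : σ ≠ 0 := by positivity
  have hr : 0 ≤ (σ - 1) / σ := div_nonneg (by linarith) (by linarith)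
  have hsplit : ((σ - 1) / σ) ^ (1 + θ) = (σ - 1) / σ * ((σ - 1) / σ) ^ θ := by
    rw [Real.rpow_add' hr (by positivity), Real.rpow_one]
  unfold costConstant revenueConstant
  rw [hsplit]
  field_simp
  ring

theorem costConstant_div_revenueConstant (hσ : 1 < σ) (hθ : σ - 1 < θ) :
    costConstant σ θ / revenueConstant σ θ = θ / (1 + θ) := by
  have hθ0 : 0 < θ := by linarith
  rw [div_eq_div_iff (revenueConstant_pos hσ hθ).ne' (by positivity), mul_comm,
    one_add_mul_costConstant hσ.le hθ0]

theorem costConstant_pos (hσ : 1 < σ) (hθ : σ - 1 < θ) : 0 < costConstant σ θ := by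
  have hθ0 : 0 < θ := by linarith
  have h : 0 < (1 + θ) * costConstant σ θ := by
    rw [one_add_mul_costConstant hσ.le hθ0]
    exact mul_pos hθ0 (revenueConstant_pos hσ hθ)
  exact pos_of_mul_pos_right h (by linarith)

end Bertrand

end

/-- **Cost share of revenue in the Bertrand model.** For `σ > 1` and `θ > σ - 1`,
the cost-integral constant and the price(revenue)-integral constant are both
positive and their ratio equals `θ/(1+θ)`, so each source's profit is the
fraction `1/(1+θ)` of its sales revenue. -/
theorem profit_share_constant (σ θ : ℝ) (hσ : 1 < σ) (hθ : σ - 1 < θ) :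
    0 < 1 - σ / (1 + θ) + (σ / (1 + θ)) * ((σ - 1) / σ) ^ (1 + θ) ∧
    0 < 1 - (σ - 1) / θ + ((σ - 1) / θ) * ((σ - 1) / σ) ^ θ ∧
    (1 - σ / (1 + θ) + (σ / (1 + θ)) * ((σ - 1) / σ) ^ (1 + θ)) /
        (1 - (σ - 1) / θ + ((σ - 1) / θ) * ((σ - 1) / σ) ^ θ)
      = θ / (1 + θ) :=
  ⟨Bertrand.costConstant_pos hσ hθ, Bertrand.revenueConstant_pos hσ hθ,
    Bertrand.costConstant_div_revenueConstant hσ hθ⟩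
end

section
/- Let β ∈ (0,1) and λ_h, λ_f > 0. The function g : [0,1] → ℝ defined by g(π) = π^{1−β} λ_h^{β} + (1−π)^{1−β} λ_f^{β} attains its maximum at the unique point π* = λ_h / (λ_h + λ_f); that is, g(π*) ≥ g(π) for all π ∈ [0,1], with equality only at π = π*. -/
/-!
Write `S = λ_h + λ_f` and `π* = λ_h / S`. Homogeneity of `λ ↦ λ^β` gives
`g(π) = S^β (π^{1-β} π*^β + (1-π)^{1-β} (1-π*)^β)`. Weighted AM-GM with weights `1-β, β` bounds
each of the two products by the matching convex combination, and these add up to `1`; so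
`g(π) ≤ S^β = g(π*)`, strictly unless `π = π*`.
-/

open Real Set

theorem rpow_mul_rpow_add_rpow_mul_rpow_lt_one {β x y : ℝ} (hβ : β ∈ Ioo (0 : ℝ) 1)
    (hx : x ∈ Icc (0 : ℝ) 1) (hy : y ∈ Icc (0 : ℝ) 1) (hxy : x ≠ y) :
    x ^ (1 - β) * y ^ β + (1 - x) ^ (1 - β) * (1 - y) ^ β < 1 := by
  obtain ⟨hβ0, hβ1⟩ := hβ
  obtain ⟨hx0, hx1⟩ := hx
  obtain ⟨hy0, hy1⟩ := hy
  have amgm {a b : ℝ} (ha : 0 ≤ a) (hb : 0 ≤ b) (hab : a ≠ b) :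
      a ^ (1 - β) * b ^ β < (1 - β) * a + β * b :=
    (geom_mean_lt_arith_mean2_weighted_iff_of_pos (sub_pos.2 hβ1) hβ0 ha hb
      (sub_add_cancel 1 β)).2 hab
  have h₁ := amgm hx0 hy0 hxy
  have h₂ := amgm (sub_nonneg.2 hx1) (sub_nonneg.2 hy1) (sub_right_injective.ne hxy)
  linarith

/-- The paper's `g`, with `lh, lf` for `λ_h, λ_f`. -/
noncomputable def diffusionFlow (β lh lf p : ℝ) : ℝ :=
  p ^ (1 - β) * lh ^ β + (1 - p) ^ (1 - β) * lf ^ β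

section diffusionFlow

variable {β lh lf : ℝ}

theorem diffusionFlow_eq_rpow_mul (hlh : 0 ≤ lh) (hlf : 0 ≤ lf) (hS : 0 < lh + lf) (p : ℝ) :
    diffusionFlow β lh lf p = (lh + lf) ^ β *
      (p ^ (1 - β) * (lh / (lh + lf)) ^ β + (1 - p) ^ (1 - β) * (1 - lh / (lh + lf)) ^ β) := by
  have hlf' : 1 - lh / (lh + lf) = lf / (lh + lf) := by field_simp; ring
  rw [hlf', div_rpow hlh hS.le, div_rpow hlf hS.le, diffusionFlow]
  field_simp [(rpow_pos_of_pos hS β).ne']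

theorem diffusionFlow_share (hlh : 0 ≤ lh) (hlf : 0 ≤ lf) (hS : 0 < lh + lf) :
    diffusionFlow β lh lf (lh / (lh + lf)) = (lh + lf) ^ β := by
  have self_mul {x : ℝ} (hx : 0 ≤ x) : x ^ (1 - β) * x ^ β = x := by
    rw [← rpow_add' hx (by norm_num), sub_add_cancel, rpow_one]
  have hq1 : lh / (lh + lf) ≤ 1 := (div_le_one hS).2 (le_add_of_nonneg_right hlf)
  rw [diffusionFlow_eq_rpow_mul hlh hlf hS, self_mul (div_nonneg hlh hS.le),
    self_mul (sub_nonneg.2 hq1), add_sub_cancel, mul_one]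

theorem diffusionFlow_lt_share (hβ : β ∈ Ioo (0 : ℝ) 1) (hlh : 0 ≤ lh) (hlf : 0 ≤ lf)
    (hS : 0 < lh + lf) {p : ℝ} (hp : p ∈ Icc (0 : ℝ) 1) (hne : p ≠ lh / (lh + lf)) :
    diffusionFlow β lh lf p < diffusionFlow β lh lf (lh / (lh + lf)) := by
  have hq : lh / (lh + lf) ∈ Icc (0 : ℝ) 1 :=
    ⟨div_nonneg hlh hS.le, (div_le_one hS).2 (le_add_of_nonneg_right hlf)⟩
  rw [diffusionFlow_share hlh hlf hS, diffusionFlow_eq_rpow_mul hlh hlf hS]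
  exact mul_lt_of_lt_one_right (rpow_pos_of_pos hS β)
    (rpow_mul_rpow_add_rpow_mul_rpow_lt_one hβ hp hq hne)

end diffusionFlow

/-- **Diffusion-optimal domestic trade share in the two-country model.**
The idea-diffusion flow `g(π) = π^{1-β} λ_h^β + (1-π)^{1-β} λ_f^β` on `[0,1]`
attains its maximum at the unique point `π* = λ_h / (λ_h + λ_f)`. -/
theorem diffusion_optimum_two_country (β lh lf : ℝ)
    (hβ : β ∈ Set.Ioo (0 : ℝ) 1) (hlh : 0 < lh) (hlf : 0 < lf) :
    (∀ p ∈ Set.Icc (0 : ℝ) 1,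
        p ^ (1 - β) * lh ^ β + (1 - p) ^ (1 - β) * lf ^ β
          ≤ (lh / (lh + lf)) ^ (1 - β) * lh ^ β
              + (1 - lh / (lh + lf)) ^ (1 - β) * lf ^ β) ∧
    (∀ p ∈ Set.Icc (0 : ℝ) 1,
        p ^ (1 - β) * lh ^ β + (1 - p) ^ (1 - β) * lf ^ β
            = (lh / (lh + lf)) ^ (1 - β) * lh ^ β
                + (1 - lh / (lh + lf)) ^ (1 - β) * lf ^ β
          → p = lh / (lh + lf)) := by
  have lt_of_ne := @diffusionFlow_lt_share β lh lf hβ hlh.le hlf.le (add_pos hlh hlf)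
  refine ⟨fun p hp => ?_, fun p hp heq => ?_⟩
  · rcases eq_or_ne p (lh / (lh + lf)) with rfl | hne
    · exact le_rfl
    · exact (lt_of_ne hp hne).le
  · by_contra hne
    exact (lt_of_ne hp hne).ne heq
end

section
/- Let θ > 0 and λ_h, λ_f, x_h, x_f, τ > 0. Then the market domestic trade share λ_h x_h^{−θ} / (λ_h x_h^{−θ} + λ_f (τ x_f)^{−θ}) equals the diffusion-optimal domestic trade share λ_h / (λ_h + λ_f) if and only if τ · x_f = x_h. -/
/-- **Market vs. diffusion-optimal domestic trade share.** The market domestic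
trade share `λ_h x_h^{-θ} / (λ_h x_h^{-θ} + λ_f (τ x_f)^{-θ})` equals the
diffusion-optimal share `λ_h / (λ_h + λ_f)` iff trade and unit cost
differences cancel out: `τ x_f = x_h`. -/
theorem market_equals_optimum_iff (θ lh lf xh xf τ : ℝ)
    (hθ : 0 < θ) (hlh : 0 < lh) (hlf : 0 < lf)
    (hxh : 0 < xh) (hxf : 0 < xf) (hτ : 0 < τ) :
    lh * xh ^ (-θ) / (lh * xh ^ (-θ) + lf * (τ * xf) ^ (-θ)) = lh / (lh + lf)
      ↔ τ * xf = xh := by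
  have hxt : 0 < τ * xf := mul_pos hτ hxf
  have ha : 0 < xh ^ (-θ) := Real.rpow_pos_of_pos hxh _
  have hb : 0 < (τ * xf) ^ (-θ) := Real.rpow_pos_of_pos hxt _
  have hd1 : 0 < lh * xh ^ (-θ) + lf * (τ * xf) ^ (-θ) :=
    add_pos (mul_pos hlh ha) (mul_pos hlf hb)
  have hd2 : 0 < lh + lf := add_pos hlh hlf
  rw [div_eq_div_iff hd1.ne' hd2.ne']
  constructor
  · intro h
    have hab : xh ^ (-θ) = (τ * xf) ^ (-θ) := by
      nlinarith [mul_pos hlh hlf]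
    have := congrArg (· ^ (-θ)⁻¹) hab
    simpa [← Real.rpow_natCast, ← Real.rpow_mul hxh.le, ← Real.rpow_mul hxt.le,
      mul_inv_cancel₀ (neg_ne_zero.mpr hθ.ne'), mul_inv_cancel₀ hθ.ne'] using this.symm
  · intro h
    rw [h]; ring
end

section
/- In the two-country two-sector setting, suppose trade costs are identical between sectors with a strict trade friction (τ^i = τ^{−i} = τ > 1), unit costs are identical between countries and sectors (x_h^i = x_h^{−i} = x_f^i = x_f^{−i} = x > 0), and home productivities are identical between the two sectors (λ_h^i = λ_h^{−i} = λ_h > 0), with θ > 0. If foreign productivities satisfy λ_f^i > λ_f^{−i} > 0, then ℵ > 1. -/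
/-- The between-sector distortion ratio `ℵ` of equation (eq: aleph): the ratio of
the relative cross-sector domestic trade-expenditure shares under the market
allocation to those under the diffusion-optimal allocation, in the two-country
(home `h`, foreign `f`), two-sector (`i` and `-i`) economy. -/
noncomputable def aleph (θ lhi lhmi lfi lfmi xhi xhmi xfi xfmi τi τmi : ℝ) : ℝ :=
  (xhi / xhmi) ^ (-θ) *
    ((lhi * xhi ^ (-θ) + lfi * (τi * xfi) ^ (-θ)) / (lhi + lfi))⁻¹ *
    ((lhmi * xhmi ^ (-θ) + lfmi * (τmi * xfmi) ^ (-θ)) / (lhmi + lfmi))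

/-- **Foreign productivity differences alone distort diffusion.** With a strict
trade friction `τ > 1`, unit costs identical between countries and sectors, and
home productivities identical between the two sectors, higher foreign
productivity in sector `i` than in sector `-i` implies `ℵ > 1`. -/
theorem aleph_gt_one_of_foreign_productivity (θ lh lfi lfmi x τ : ℝ)
    (hθ : 0 < θ) (hlh : 0 < lh) (hx : 0 < x) (hτ : 1 < τ)
    (hlfmi : 0 < lfmi) (hll : lfmi < lfi) :
    1 < aleph θ lh lh lfi lfmi x x x x τ τ := by
  unfold aleph
  have ha : (0:ℝ) < x ^ (-θ) := Real.rpow_pos_of_pos hx _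
  have hb : (0:ℝ) < (τ * x) ^ (-θ) := Real.rpow_pos_of_pos (by nlinarith) _
  have hba : (τ * x) ^ (-θ) < x ^ (-θ) :=
    Real.rpow_lt_rpow_of_neg hx (by nlinarith) (by linarith)
  set a := x ^ (-θ)
  set b := (τ * x) ^ (-θ)
  have hdi : (0:ℝ) < lh + lfi := by linarith
  have hdmi : (0:ℝ) < lh + lfmi := by linarith
  have hlfi : (0:ℝ) < lfi := hlfmi.trans hll
  have hAi : (0:ℝ) < (lh * a + lfi * b) / (lh + lfi) := div_pos (by nlinarith) hdi
  rw [div_self hx.ne', Real.one_rpow, one_mul, inv_mul_eq_div, one_lt_div hAi,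
    div_lt_div_iff₀ hdi hdmi]
  nlinarith [mul_pos hlh (mul_pos (sub_pos.2 hba) (sub_pos.2 hll))]
end
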